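/- The identity (a²/24)(9+7a)(3+a) = ∫_0^{(3+a)√a} (t + 2a√a) η(t) dt holds for all a ∈ [0,1], where η is the function from the counterexample. -/

import Mathlib

/-!
Write `ψ v = (3 + v²) v`, so that `(3 + u) √u = ψ (√u)`. Since `ψ` is an increasing bijection of
`ℝ`, the hypothesis on `a` says `a = (ψ⁻¹)²` on `[0, 4]`, hence `η t = η̂ (ψ⁻¹(t)²)` with `η̂` the
rational function `etaProfile`. The substitution `t = ψ v` turns the integral over
`[0, ψ (√s)]` into `∫₀^√s (ψ v + 2s√s) η̂ (v²) ψ'(v) dv`, whose integrand is rational in `v` with an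
explicit primitive; evaluating it at `√s` and `0` gives the left-hand side.
-/

open Set Filter intervalIntegral

noncomputable section

def psi (v : ℝ) : ℝ := (3 + v ^ 2) * v

theorem psi_strictMono : StrictMono psi := fun x y h => by
  unfold psi; nlinarith [sq_nonneg (x + y), sq_nonneg x, sq_nonneg y]

theorem continuous_psi : Continuous psi := by unfold psi; fun_prop

theorem hasDerivAt_psi (x : ℝ) : HasDerivAt psi (3 + 3 * x ^ 2) x := by
  have := ((hasDerivAt_pow 2 x).const_add 3).fun_mul (hasDerivAt_id' x)
  refine this.congr_deriv ?_
  push_cast; ring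

theorem psi_sub_self (v : ℝ) : psi v - v = (2 + v ^ 2) * v := by unfold psi; ring

theorem psi_surjective : Function.Surjective psi := by
  refine continuous_psi.surjective
    (tendsto_atTop_mono' _ ((eventually_ge_atTop 0).mono fun v hv => ?_) tendsto_id)
    (tendsto_atBot_mono' _ ((eventually_le_atBot 0).mono fun v hv => ?_) tendsto_id)
  · show v ≤ psi v
    linarith [psi_sub_self v, mul_nonneg (by positivity : (0 : ℝ) ≤ 2 + v ^ 2) hv]
  · show psi v ≤ v
    linarith [psi_sub_self v,
      mul_nonpos_of_nonneg_of_nonpos (by positivity : (0 : ℝ) ≤ 2 + v ^ 2) hv]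

def psiOrderIso : ℝ ≃o ℝ :=
  StrictMono.orderIsoOfSurjective psi psi_strictMono psi_surjective

theorem psiOrderIso_symm_psi (v : ℝ) : psiOrderIso.symm (psi v) = v :=
  StrictMono.orderIsoOfSurjective_symm_apply_self psi psi_strictMono psi_surjective v

theorem psi_sqrt {u : ℝ} (hu : 0 ≤ u) : psi (√u) = (3 + u) * √u := by
  rw [psi, Real.sq_sqrt hu]

theorem eq_sq_psiOrderIso_symm {u y : ℝ} (hu : 0 ≤ u) (h : (3 + u) * √u = y) :
    u = psiOrderIso.symm y ^ 2 := by
  rw [← h, ← psi_sqrt hu, psiOrderIso_symm_psi, Real.sq_sqrt hu]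

def etaProfile (u : ℝ) : ℝ :=
  u * (10 * u ^ 3 + 41 * u ^ 2 + 54 * u + 27) / (54 * (u + 1) ^ 3)

theorem continuous_etaProfile_sq : Continuous fun x => etaProfile (x ^ 2) := by
  unfold etaProfile
  exact Continuous.div (by fun_prop) (by fun_prop) fun x => by positivity

def etaMomentPrimitive (c x : ℝ) : ℝ :=
  (5 * x ^ 8 + 34 * x ^ 6 + 8 * c * x ^ 5 + 65 * x ^ 4 + 28 * c * x ^ 3 + 16 * x ^ 2
      + 8 * c * x) / 72 + (2 - c * x) / (9 * (1 + x ^ 2))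

theorem hasDerivAt_etaMomentPrimitive (c x : ℝ) :
    HasDerivAt (etaMomentPrimitive c) ((psi x + c) * etaProfile (x ^ 2) * (3 + 3 * x ^ 2)) x := by
  have hX := hasDerivAt_id' x
  have hpow (n : ℕ) := hasDerivAt_pow n x
  have hpoly := ((((((((hpow 8).const_mul 5).fun_add ((hpow 6).const_mul 34)).fun_add
    ((hpow 5).const_mul (8 * c))).fun_add ((hpow 4).const_mul 65)).fun_add
    ((hpow 3).const_mul (28 * c))).fun_add ((hpow 2).const_mul 16)).fun_add (hX.const_mul (8 * c)))
  have hrat := ((hX.const_mul c).const_sub 2).fun_div (((hpow 2).const_add 1).const_mul 9)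
    (by positivity)
  refine ((hpoly.div_const 72).fun_add hrat).congr_deriv ?_
  simp only [psi, etaProfile]
  field_simp
  norm_num
  ring

theorem integral_mul_etaProfile_psiOrderIso_symm (c w : ℝ) :
    ∫ t in (0 : ℝ)..psi w, (t + c) * etaProfile (psiOrderIso.symm t ^ 2) =
      etaMomentPrimitive c w - etaMomentPrimitive c 0 := by
  have hsubst := integral_comp_mul_deriv (a := 0) (b := w)
    (g := fun t => (t + c) * etaProfile (psiOrderIso.symm t ^ 2)) (fun x _ => hasDerivAt_psi x)
    (by fun_prop) ((continuous_id.add continuous_const).mul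
      (continuous_etaProfile_sq.comp psiOrderIso.symm.continuous))
  simp only [Function.comp_def, psiOrderIso_symm_psi] at hsubst
  rw [show psi 0 = 0 by simp [psi]] at hsubst
  rw [← hsubst]
  exact integral_eq_sub_of_hasDerivAt (fun x _ => hasDerivAt_etaMomentPrimitive c x)
    (Continuous.intervalIntegrable (by
      have := continuous_etaProfile_sq; have := continuous_psi; fun_prop) 0 w)

end

/-- `(a²/24)(9+7a)(3+a) = ∫_0^{(3+a)√a} (t + 2a√a) η(t) dt` for all `a ∈ [0,1]`,
where `η` is the function from the counterexample. -/
theorem stmt_14 (a : ℝ → ℝ)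
    (ha : ∀ y ∈ Set.Icc (0 : ℝ) 4,
      a y ∈ Set.Icc (0 : ℝ) 1 ∧ (3 + a y) * Real.sqrt (a y) = y)
    (η : ℝ → ℝ)
    (hη : ∀ y, η y = a y * (10 * a y ^ 3 + 41 * a y ^ 2 + 54 * a y + 27) /
      (54 * (a y + 1) ^ 3)) :
    ∀ s ∈ Set.Icc (0 : ℝ) 1,
      (s ^ 2 / 24) * (9 + 7 * s) * (3 + s) =
        ∫ t in (0 : ℝ)..((3 + s) * Real.sqrt s), (t + 2 * s * Real.sqrt s) * η t := by
  rintro s ⟨hs0, hs1⟩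
  have hrange : uIcc 0 ((3 + s) * √s) ⊆ Icc 0 4 := by
    have := Real.sqrt_le_one.mpr hs1
    rw [uIcc_of_le (by positivity)]
    exact Icc_subset_Icc le_rfl (by nlinarith [Real.sqrt_nonneg s])
  have hη_eq : EqOn (fun t => (t + 2 * s * √s) * η t)
      (fun t => (t + 2 * s * √s) * etaProfile (psiOrderIso.symm t ^ 2))
      (uIcc 0 ((3 + s) * √s)) := by
    intro t ht
    obtain ⟨⟨ha0, -⟩, hat⟩ := ha t (hrange ht)
    simp only [hη, etaProfile, ← eq_sq_psiOrderIso_symm ha0 hat]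
  rw [integral_congr hη_eq, ← psi_sqrt hs0, integral_mul_etaProfile_psiOrderIso_symm]
  have hs : √s ^ 2 = s := Real.sq_sqrt hs0
  set w := √s
  rw [← hs]
  simp only [etaMomentPrimitive]
  field_simp
  ring
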